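/- (Invariance of the area vector.) Let n ≥ 1, let γ : ℤ → Im ℍ be a closed polygon of period n (γ_{i+n} = γ_i), let r ∈ ℝ, l > 0, and let η : ℤ → Im ℍ be an n-periodic Darboux transform of γ with twist parameter r and distance l. Then the area vectors of γ and η coincide: ∑_{j=1}^{n−1} (γ_j − γ₀) × (γ_{j+1} − γ₀) = ∑_{j=1}^{n−1} (η_j − η₀) × (η_{j+1} − η₀), where for purely imaginary quaternions p, q the cross product is p × q = (1/2)·(p·q − q·p). -/

import Mathlib

/-!
Write `η = γ + l T`. On each edge, the Darboux relation, its quaternionic conjugate (all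
vectors involved are imaginary, so conjugation reverses products up to sign) and
`T² = -1` give `η_i × η_{i+1} - γ_i × γ_{i+1} = g_{i+1} - g_i` with the periodic potential
`g_i = γ_i × l T_i - l r T_i`, so summing over a period the two sums `∑ x_j × x_{j+1}` agree.
For a closed polygon that sum is the area vector based at vertex `0`, since the terms
involving the base point add up to `P × x_0 + x_0 × P = 0`, where `P = ∑ x_j`.
-/

open Quaternion Finset

/-- The cross product of purely imaginary quaternions: `p × q = (1/2)(pq − qp)`. -/
noncomputable def qcross (p q : ℍ[ℝ]) : ℍ[ℝ] :=
  (2 : ℝ)⁻¹ • (p * q - q * p)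

lemma sum_range_sub_eq_zero_of_closed {M : Type*} [AddCommGroup M] {n : ℕ} (x : ℤ → M)
    (hx : x n = x 0) : ∑ j ∈ range n, (x (j + 1) - x j) = 0 := by
  have h := sum_range_sub (fun k : ℕ => x k) n
  push_cast at h
  rw [h, hx, sub_self]

lemma sum_range_comp_add_one_of_closed {M : Type*} [AddCommGroup M] {n : ℕ} (x : ℤ → M)
    (hx : x n = x 0) : ∑ j ∈ range n, x (j + 1) = ∑ j ∈ range n, x j := by
  rw [← sub_eq_zero, ← sum_sub_distrib, sum_range_sub_eq_zero_of_closed x hx]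

lemma sum_qcross_sub_base_eq_sum_qcross {n : ℕ} (x : ℤ → ℍ[ℝ]) (hx : x n = x 0) :
    ∑ j ∈ Ico 1 n, qcross (x j - x 0) (x ((j : ℤ) + 1) - x 0) =
      ∑ j ∈ range n, qcross (x j) (x ((j : ℤ) + 1)) := by
  rw [sum_subset (fun j hj => mem_range.2 (mem_Ico.1 hj).2)
    (fun j _ hj => by simp_all [qcross])]
  simp only [qcross, mul_sub, sub_mul, ← smul_sum, sum_sub_distrib, ← sum_mul, ← mul_sum,
    sum_range_comp_add_one_of_closed x hx]
  module

lemma mul_self_eq_neg_one_of_re_eq_zero {u : ℍ[ℝ]} (hu : u.re = 0) (hnorm : ‖u‖ = 1) :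
    u * u = -1 := by
  have h := Quaternion.sq_eq_neg_normSq.mpr hu
  rw [Quaternion.normSq_eq_norm_mul_self, hnorm, one_mul, sq] at h
  simpa using h

section Darboux

variable {a b u v : ℍ[ℝ]} {r l : ℝ}

lemma darboux_relation_star (ha : a.re = 0) (hb : b.re = 0) (hu : u.re = 0) (hv : v.re = 0)
    (H : v * (-(r : ℍ[ℝ]) + l • u - (b - a)) = (-(r : ℍ[ℝ]) + l • u - (b - a)) * u) :
    ((r : ℍ[ℝ]) + l • u - (b - a)) * v = u * ((r : ℍ[ℝ]) + l • u - (b - a)) := by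
  have h := congrArg star H
  simp only [star_mul, star_sub, star_add, star_neg, Quaternion.star_smul,
    Quaternion.star_coe, Quaternion.star_eq_neg.mpr ha, Quaternion.star_eq_neg.mpr hb,
    Quaternion.star_eq_neg.mpr hu, Quaternion.star_eq_neg.mpr hv, smul_neg, neg_mul, mul_neg] at h
  linear_combination (norm := noncomm_ring) h

lemma qcross_add_smul_sub_qcross (ha : a.re = 0) (hb : b.re = 0) (hu : u.re = 0)
    (hv : v.re = 0) (huu : u * u = -1)
    (H : v * (-(r : ℍ[ℝ]) + l • u - (b - a)) = (-(r : ℍ[ℝ]) + l • u - (b - a)) * u) :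
    qcross (a + l • u) (b + l • v) - qcross a b =
      (qcross b (l • v) - (l * r) • v) - (qcross a (l • u) - (l * r) • u) := by
  have Hs := darboux_relation_star ha hb hu hv H
  simp only [mul_sub, sub_mul, mul_add, add_mul, mul_neg, neg_mul, mul_smul_comm,
    smul_mul_assoc, Quaternion.mul_coe_eq_smul, Quaternion.coe_mul_eq_smul, huu] at H Hs
  simp only [qcross, mul_add, add_mul, mul_smul_comm, smul_mul_assoc]
  linear_combination (norm := module) ((2 : ℝ)⁻¹ * l) • Hs - ((2 : ℝ)⁻¹ * l) • H

end Darboux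

theorem darboux_preserves_area_vector_general
    (n : ℕ)
    (γ η : ℤ → ℍ[ℝ]) (hγim : ∀ i, (γ i).re = 0)
    (hγper : ∀ i, γ (i + n) = γ i) (hηper : ∀ i, η (i + n) = η i)
    (r : ℝ) (l : ℝ) (hl : 0 < l)
    (S : ℤ → ℍ[ℝ]) (hS : ∀ i, S i = γ (i + 1) - γ i)
    (T : ℤ → ℍ[ℝ]) (hT : ∀ i, T i = l⁻¹ • (η i - γ i))
    (hTim : ∀ i, (T i).re = 0) (hTnorm : ∀ i, ‖T i‖ = 1)
    (hTdarboux : ∀ i,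
      T (i + 1) * (-(r : ℍ[ℝ]) + l • T i - S i) =
        (-(r : ℍ[ℝ]) + l • T i - S i) * T i) :
    ∑ j ∈ Finset.Ico 1 n, qcross (γ j - γ 0) (γ ((j : ℤ) + 1) - γ 0) =
      ∑ j ∈ Finset.Ico 1 n, qcross (η j - η 0) (η ((j : ℤ) + 1) - η 0) := by
  have hη : ∀ i, η i = γ i + l • T i := fun i => by
    rw [hT, smul_smul, mul_inv_cancel₀ hl.ne', one_smul, add_sub_cancel]
  set g : ℤ → ℍ[ℝ] := fun i => qcross (γ i) (l • T i) - (l * r) • T i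
  have hstep : ∀ i : ℤ, qcross (η i) (η (i + 1)) =
      qcross (γ i) (γ (i + 1)) + (g (i + 1) - g i) := fun i => by
    rw [hη, hη, ← sub_eq_iff_eq_add']
    exact qcross_add_smul_sub_qcross (hγim i) (hγim (i + 1)) (hTim i) (hTim (i + 1))
      (mul_self_eq_neg_one_of_re_eq_zero (hTim i) (hTnorm i)) (hS i ▸ hTdarboux i)
  have hγn : γ n = γ 0 := by simpa using hγper 0
  have hηn : η n = η 0 := by simpa using hηper 0
  have hgn : g n = g 0 := by simp only [g, hT, hγn, hηn]
  rw [sum_qcross_sub_base_eq_sum_qcross γ hγn, sum_qcross_sub_base_eq_sum_qcross η hηn]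
  simp only [hstep, sum_add_distrib, sum_range_sub_eq_zero_of_closed g hgn, add_zero]

theorem darboux_preserves_area_vector
    (n : ℕ) (hn : 1 ≤ n)
    (γ η : ℤ → ℍ[ℝ]) (hγim : ∀ i, (γ i).re = 0) (hηim : ∀ i, (η i).re = 0)
    (hγper : ∀ i, γ (i + n) = γ i) (hηper : ∀ i, η (i + n) = η i)
    (r : ℝ) (l : ℝ) (hl : 0 < l)
    (S : ℤ → ℍ[ℝ]) (hS : ∀ i, S i = γ (i + 1) - γ i)
    (T : ℤ → ℍ[ℝ]) (hT : ∀ i, T i = l⁻¹ • (η i - γ i))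
    (hTim : ∀ i, (T i).re = 0) (hTnorm : ∀ i, ‖T i‖ = 1)
    (hTdarboux : ∀ i,
      T (i + 1) * (-(r : ℍ[ℝ]) + l • T i - S i) =
        (-(r : ℍ[ℝ]) + l • T i - S i) * T i) :
    ∑ j ∈ Finset.Ico 1 n, qcross (γ j - γ 0) (γ ((j : ℤ) + 1) - γ 0) =
      ∑ j ∈ Finset.Ico 1 n, qcross (η j - η 0) (η ((j : ℤ) + 1) - η 0) :=
  darboux_preserves_area_vector_general n γ η hγim hγper hηper r l hl S hS T hT hTim hTnorm
    hTdarboux
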